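/- Let (N, ⊴, c) be a MinBudget instance, I ⊆ N an irreducible ideal of ⊴, and J ⊆ N \ I an irreducible ideal of ⊴ restricted to N \ I. If I ≻ J in the cbr-preorder, then I ∪ J ⪯ I in the cbr-preorder. -/

import Mathlib

open List

variable {ι : Type*} [DecidableEq ι]

/-- Total cost of a schedule (list of jobs). -/
def listCost (c : ι → ℝ) (S : List ι) : ℝ := (S.map c).sum

/-- Budget of a schedule: maximum cost of a prefix (the empty prefix has cost 0). -/
def listBudget (c : ι → ℝ) : List ι → ℝ
  | [] => 0
  | j :: t => max 0 (c j + listBudget c t)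

/-- Return of a schedule. -/
def listReturn (c : ι → ℝ) (S : List ι) : ℝ := listCost c S - listBudget c S

/-- `S` enumerates the finite job set `N` without repetition. -/
def IsScheduleOf (N : Finset ι) (S : List ι) : Prop :=
  S.Nodup ∧ ∀ j, j ∈ S ↔ j ∈ N

/-- `S` is a linear extension of the precedence relation `r` (restricted to its jobs). -/
def RespectsOrder (r : ι → ι → Prop) (S : List ι) : Prop :=
  ∀ i j, r i j → i ∈ S → j ∈ S → S.idxOf i ≤ S.idxOf j

/-- Minimum budget over all feasible schedules of the job set `X`. -/
noncomputable def setBudget (r : ι → ι → Prop) (c : ι → ℝ) (X : Finset ι) : ℝ :=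
  sInf {b | ∃ S : List ι, IsScheduleOf X S ∧ RespectsOrder r S ∧ listBudget c S = b}

/-- Total cost of a job set. -/
def setCost (c : ι → ℝ) (X : Finset ι) : ℝ := ∑ j ∈ X, c j

/-- Return of a job set. -/
noncomputable def setReturn (r : ι → ι → Prop) (c : ι → ℝ) (X : Finset ι) : ℝ :=
  setCost c X - setBudget r c X

/-- The cbr-preorder on job sets. -/
def cbrLE (r : ι → ι → Prop) (c : ι → ℝ) (X Y : Finset ι) : Prop :=
  (setCost c X < 0 ∧ 0 ≤ setCost c Y) ∨
  (setCost c X < 0 ∧ setCost c Y < 0 ∧ setBudget r c X < setBudget r c Y) ∨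
  (setCost c X < 0 ∧ setCost c Y < 0 ∧ setBudget r c X = setBudget r c Y ∧
    setReturn r c X ≤ setReturn r c Y) ∨
  (0 ≤ setCost c X ∧ 0 ≤ setCost c Y ∧ setReturn r c X ≤ setReturn r c Y)

/-- `J` is an ideal (downward-closed subset) of `r` restricted to `I`. -/
def IsIdealIn (r : ι → ι → Prop) (I J : Finset ι) : Prop :=
  J ⊆ I ∧ ∀ j ∈ J, ∀ i ∈ I, r i j → i ∈ J

/-- `F` is a filter (upward-closed subset) of `r` restricted to `I`. -/
def IsFilterIn (r : ι → ι → Prop) (I F : Finset ι) : Prop :=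
  F ⊆ I ∧ ∀ i ∈ F, ∀ j ∈ I, r i j → j ∈ F

/-- `I` is an interval of `r` on `N`: intersection of an ideal and a filter. -/
def IsIntervalIn (r : ι → ι → Prop) (N I : Finset ι) : Prop :=
  ∃ J F, IsIdealIn r N J ∧ IsFilterIn r N F ∧ I = J ∩ F

/-- An irreducible interval: every ideal of the restricted order is `⪰` the interval. -/
def IsIrreducibleIn (r : ι → ι → Prop) (c : ι → ℝ) (N I : Finset ι) : Prop :=
  IsIntervalIn r N I ∧ ∀ J, IsIdealIn r I J → cbrLE r c I J

/-- A schedule (given as blocks `SS`) in increasing irreducible structure. -/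
def IncIrrStructure (r : ι → ι → Prop) (c : ι → ℝ) (N : Finset ι)
    (SS : List (List ι)) : Prop :=
  IsScheduleOf N SS.flatten ∧ RespectsOrder r SS.flatten ∧
  (∀ S ∈ SS, IsIrreducibleIn r c N S.toFinset ∧ RespectsOrder r S ∧
    listBudget c S = setBudget r c S.toFinset) ∧
  ∀ i j : Fin SS.length, i < j → cbrLE r c (SS.get i).toFinset (SS.get j).toFinset

/-!
If `c(I) < 0`, then `J ⪯ I` forces `c(J) < 0` and `b(J) ≤ b(I)`, so running `I` before `J`
gives `b(I ∪ J) ≤ b(I)`. If `c(I) ≥ 0`, everything reduces to `b(I) + c(J) ≤ b(I ∪ J)`.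
When `c(J) < 0`, irreducibility makes `J` the cheapest of its ideals, and the bound is read off
at the prefix of a schedule of `I ∪ J` where its `I`-part reaches its peak. When `c(J) ≥ 0`,
every ideal of `I` or of `J` has return at least `r(J)`, and `b(A) + b(K) + r(J) ≤ b(A ∪ K)`
for ideals `A` of `I` and `K` of `J` follows by induction, removing the last job of an optimal
schedule of `A ∪ K`.
-/

section ListBudget

omit [DecidableEq ι]

variable (c : ι → ℝ)

theorem listBudget_nonneg (S : List ι) : 0 ≤ listBudget c S := by
  cases S <;> simp [listBudget]

theorem listCost_cons (j : ι) (S : List ι) : listCost c (j :: S) = c j + listCost c S := by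
  simp [listCost]

theorem listCost_le_listBudget (S : List ι) : listCost c S ≤ listBudget c S := by
  induction S with
  | nil => simp [listCost, listBudget]
  | cons j S ih =>
    rw [listCost_cons, listBudget]
    exact le_max_of_le_right (by linarith)

theorem listBudget_append (A B : List ι) :
    listBudget c (A ++ B) = max (listBudget c A) (listCost c A + listBudget c B) := by
  induction A with
  | nil => simp [listBudget, listCost, listBudget_nonneg]
  | cons j A ih =>
    rw [List.cons_append, listBudget, ih, listBudget, listCost_cons, ← max_add_add_left,
      ← max_assoc, add_assoc]

theorem listCost_take_le_listBudget (S : List ι) (n : ℕ) :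
    listCost c (S.take n) ≤ listBudget c S := by
  conv_rhs => rw [← List.take_append_drop n S, listBudget_append]
  exact le_max_of_le_left (listCost_le_listBudget c _)

theorem exists_listBudget_eq_listCost_take (S : List ι) :
    ∃ n, listBudget c S = listCost c (S.take n) := by
  induction S with
  | nil => exact ⟨0, rfl⟩
  | cons j S ih =>
    obtain ⟨n, hn⟩ := ih
    rcases le_total (c j + listBudget c S) 0 with h | h
    · exact ⟨0, by simp [listBudget, listCost, h]⟩
    · exact ⟨n + 1, by rw [listBudget, max_eq_right h, hn, List.take_succ_cons, listCost_cons]⟩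

theorem exists_take_filter_eq_filter_take (p : ι → Bool) (S : List ι) (t : ℕ) :
    ∃ n, (S.filter p).take t = (S.take n).filter p := by
  induction S generalizing t with
  | nil => exact ⟨0, by simp⟩
  | cons a S ih =>
    cases t with
    | zero => exact ⟨0, by simp⟩
    | succ t =>
      by_cases hpa : p a
      · obtain ⟨n, hn⟩ := ih t
        exact ⟨n + 1, by simp [hpa, hn]⟩
      · obtain ⟨n, hn⟩ := ih (t + 1)
        exact ⟨n + 1, by simp [hpa, hn]⟩

end ListBudget

section Schedules

variable {r : ι → ι → Prop} {X Y : Finset ι} {S : List ι}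

theorem respectsOrder_iff_pairwise (hS : S.Nodup) :
    RespectsOrder r S ↔ S.Pairwise fun a b => ¬ r b a := by
  rw [List.pairwise_iff_getElem]
  constructor
  · intro hO i j hi hj hij hji
    have := hO _ _ hji (List.getElem_mem hj) (List.getElem_mem hi)
    rw [hS.idxOf_getElem, hS.idxOf_getElem] at this
    omega
  · intro hO a b hab ha hb
    by_contra! hlt
    have ha' := List.idxOf_lt_length_iff.2 ha
    have hb' := List.idxOf_lt_length_iff.2 hb
    have := hO _ _ hb' ha' hlt
    rw [List.getElem_idxOf, List.getElem_idxOf] at this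
    exact this hab

omit [DecidableEq ι] in
theorem IsScheduleOf.listCost_eq (c : ι → ℝ) (hS : IsScheduleOf X S) :
    listCost c S = setCost c X := by
  classical
  have hX : X = S.toFinset := by
    ext a
    rw [List.mem_toFinset, hS.2 a]
  rw [hX, setCost, List.sum_toFinset _ hS.1, listCost]

omit [DecidableEq ι] in
theorem IsScheduleOf.filter (p : ι → Prop) [DecidablePred p] (hS : IsScheduleOf X S) :
    IsScheduleOf (X.filter p) (S.filter p) :=
  ⟨hS.1.filter _, fun j => by simp [hS.2 j]⟩

theorem isScheduleOf_toFinset (hS : S.Nodup) : IsScheduleOf S.toFinset S :=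
  ⟨hS, fun _ => List.mem_toFinset.symm⟩

theorem IsScheduleOf.append {T : List ι} (hXY : Disjoint X Y) (hS : IsScheduleOf X S)
    (hT : IsScheduleOf Y T) : IsScheduleOf (X ∪ Y) (S ++ T) := by
  refine ⟨List.nodup_append.2 ⟨hS.1, hT.1, ?_⟩, fun j => ?_⟩
  · rintro a ha b hb rfl
    exact Finset.disjoint_left.1 hXY ((hS.2 a).1 ha) ((hT.2 a).1 hb)
  · rw [List.mem_append, Finset.mem_union, hS.2 j, hT.2 j]

theorem isScheduleOf_concat_iff {x : ι} :
    IsScheduleOf X (S ++ [x]) ↔ x ∈ X ∧ IsScheduleOf (X.erase x) S := by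
  simp only [IsScheduleOf, List.nodup_append, List.mem_append, List.mem_singleton,
    Finset.mem_erase, List.nodup_cons, List.nodup_nil]
  grind

theorem isIdealIn_toFinset_take (hS : IsScheduleOf X S) (hO : S.Pairwise fun a b => ¬ r b a)
    (n : ℕ) : IsIdealIn r X (S.take n).toFinset := by
  refine ⟨fun a ha => (hS.2 a).1 (List.mem_of_mem_take (List.mem_toFinset.1 ha)), ?_⟩
  intro j hj i hi hij
  rw [← List.take_append_drop n S, List.pairwise_append] at hO
  rw [List.mem_toFinset] at hj ⊢
  by_contra hi'
  have hiS := (hS.2 i).2 hi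
  rw [← List.take_append_drop n S, List.mem_append] at hiS
  exact hO.2.2 j hj i (hiS.resolve_left hi') hij

end Schedules

section Budgets

variable {r : ι → ι → Prop} {c : ι → ℝ} {X Y : Finset ι} {S : List ι}

theorem setCost_union (hXY : Disjoint X Y) : setCost c (X ∪ Y) = setCost c X + setCost c Y :=
  Finset.sum_union hXY

omit [DecidableEq ι] in
theorem exists_maximal_of_isPartialOrder (hr : IsPartialOrder ι r) (hX : X.Nonempty) :
    ∃ x ∈ X, ∀ y ∈ X, r x y → y = x := by
  let _ : PartialOrder ι :=
    { le := r
      le_refl := hr.refl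
      le_trans := hr.trans
      le_antisymm := hr.antisymm }
  obtain ⟨x, hx, hmax⟩ := X.exists_maximal hX
  exact ⟨x, hx, fun y hy hxy => hr.antisymm y x (hmax hy hxy) hxy⟩

theorem pairwise_concat_of_maximal {x : ι} (hS : IsScheduleOf (X.erase x) S)
    (hO : S.Pairwise fun a b => ¬ r b a) (hmax : ∀ y ∈ X, r x y → y = x) :
    (S ++ [x]).Pairwise fun a b => ¬ r b a := by
  refine List.pairwise_append.2 ⟨hO, List.pairwise_singleton _ _, ?_⟩
  rintro a ha b hb hxa
  obtain ⟨hax, haX⟩ := Finset.mem_erase.1 ((hS.2 a).1 ha)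
  exact hax (hmax a haX (List.mem_singleton.1 hb ▸ hxa))

theorem exists_schedule (hr : IsPartialOrder ι r) (X : Finset ι) :
    ∃ S, IsScheduleOf X S ∧ S.Pairwise fun a b => ¬ r b a := by
  induction X using Finset.strongInduction with
  | H X ih =>
    rcases X.eq_empty_or_nonempty with rfl | hX
    · exact ⟨[], ⟨List.nodup_nil, by simp⟩, List.Pairwise.nil⟩
    · obtain ⟨x, hx, hmax⟩ := exists_maximal_of_isPartialOrder hr hX
      obtain ⟨S, hS, hO⟩ := ih _ (Finset.erase_ssubset hx)
      exact ⟨S ++ [x], isScheduleOf_concat_iff.2 ⟨hx, hS⟩,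
        pairwise_concat_of_maximal hS hO hmax⟩

def budgets (r : ι → ι → Prop) (c : ι → ℝ) (X : Finset ι) : Set ℝ :=
  {b | ∃ S, IsScheduleOf X S ∧ RespectsOrder r S ∧ listBudget c S = b}

theorem finite_budgets (r : ι → ι → Prop) (c : ι → ℝ) (X : Finset ι) :
    (budgets r c X).Finite := by
  refine ((X.toList.permutations.map (listBudget c)).toFinset.finite_toSet).subset ?_
  rintro b ⟨S, hS, -, rfl⟩
  have hperm : S.Perm X.toList :=
    List.perm_of_nodup_nodup_toFinset_eq hS.1 X.nodup_toList (by ext a; simp [hS.2 a])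
  simpa using ⟨S, hperm, rfl⟩

theorem listBudget_mem_budgets (hS : IsScheduleOf X S) (hO : S.Pairwise fun a b => ¬ r b a) :
    listBudget c S ∈ budgets r c X :=
  ⟨S, hS, (respectsOrder_iff_pairwise hS.1).2 hO, rfl⟩

theorem nonempty_budgets (hr : IsPartialOrder ι r) (X : Finset ι) : (budgets r c X).Nonempty :=
  let ⟨_, hS, hO⟩ := exists_schedule hr X
  ⟨_, listBudget_mem_budgets hS hO⟩

theorem setBudget_le_listBudget (hS : IsScheduleOf X S) (hO : S.Pairwise fun a b => ¬ r b a) :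
    setBudget r c X ≤ listBudget c S :=
  csInf_le (finite_budgets r c X).bddBelow (listBudget_mem_budgets hS hO)

theorem le_setBudget (hr : IsPartialOrder ι r) {x : ℝ}
    (h : ∀ S, IsScheduleOf X S → (S.Pairwise fun a b => ¬ r b a) → x ≤ listBudget c S) :
    x ≤ setBudget r c X := by
  refine le_csInf (nonempty_budgets hr X) ?_
  rintro b ⟨S, hS, hO, rfl⟩
  exact h S hS ((respectsOrder_iff_pairwise hS.1).1 hO)

theorem exists_optimal_schedule (hr : IsPartialOrder ι r) (X : Finset ι) :
    ∃ S, IsScheduleOf X S ∧ (S.Pairwise fun a b => ¬ r b a) ∧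
      listBudget c S = setBudget r c X :=
  let ⟨S, hS, hO, h⟩ := (nonempty_budgets hr X).csInf_mem (finite_budgets r c X)
  ⟨S, hS, (respectsOrder_iff_pairwise hS.1).1 hO, h⟩

theorem setCost_le_setBudget (hr : IsPartialOrder ι r) (X : Finset ι) :
    setCost c X ≤ setBudget r c X := by
  obtain ⟨S, hS, -, hb⟩ := exists_optimal_schedule (c := c) hr X
  rw [← hb, ← hS.listCost_eq]
  exact listCost_le_listBudget c S

end Budgets

section Blocks

variable {r : ι → ι → Prop} {c : ι → ℝ} {X Y I J : Finset ι} {S : List ι}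

theorem cbrLE_iff_of_nonneg (hX : 0 ≤ setCost c X) :
    cbrLE r c X Y ↔ 0 ≤ setCost c Y ∧ setReturn r c X ≤ setReturn r c Y := by
  refine ⟨?_, fun h => Or.inr (Or.inr (Or.inr ⟨hX, h⟩))⟩
  rintro (⟨h, -⟩ | ⟨h, -⟩ | ⟨h, -⟩ | ⟨-, h⟩) <;> first | exact h | linarith

theorem cbrLE_iff_of_neg (hY : setCost c Y < 0) :
    cbrLE r c X Y ↔ setCost c X < 0 ∧ (setBudget r c X < setBudget r c Y ∨
      setBudget r c X = setBudget r c Y ∧ setReturn r c X ≤ setReturn r c Y) := by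
  constructor
  · rintro (⟨-, h⟩ | ⟨hX, -, h⟩ | ⟨hX, -, h⟩ | ⟨-, h, -⟩)
    · linarith
    · exact ⟨hX, Or.inl h⟩
    · exact ⟨hX, Or.inr h⟩
    · linarith
  · rintro ⟨hX, h | h⟩
    · exact Or.inr (Or.inl ⟨hX, hY, h⟩)
    · exact Or.inr (Or.inr (Or.inl ⟨hX, hY, h⟩))

omit [DecidableEq ι] in
theorem isIdealIn_self (X : Finset ι) : IsIdealIn r X X :=
  ⟨subset_rfl, fun _ _ _ hi _ => hi⟩

theorem IsIdealIn.union (hX : IsIdealIn r I X) (hY : IsIdealIn r I Y) : IsIdealIn r I (X ∪ Y) :=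
  ⟨Finset.union_subset hX.1 hY.1, fun j hj i hi hij => Finset.mem_union.2 <|
    (Finset.mem_union.1 hj).imp (fun hj => hX.2 j hj i hi hij) (fun hj => hY.2 j hj i hi hij)⟩

theorem IsIdealIn.erase {x : ι} (hX : IsIdealIn r I X) (hmax : ∀ y ∈ X, r x y → y = x) :
    IsIdealIn r I (X.erase x) := by
  refine ⟨(Finset.erase_subset _ _).trans hX.1, fun j hj i hi hij => ?_⟩
  obtain ⟨hjx, hjX⟩ := Finset.mem_erase.1 hj
  refine Finset.mem_erase.2 ⟨?_, hX.2 j hjX i hi hij⟩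
  rintro rfl
  exact hjx (hmax j hjX hij)

theorem exists_isIdealIn_setBudget_le_setCost_inter (hS : IsScheduleOf X S)
    (hO : S.Pairwise fun a b => ¬ r b a) (hYX : Y ⊆ X) :
    ∃ P, IsIdealIn r X P ∧ setBudget r c Y ≤ setCost c (P ∩ Y) ∧
      setCost c P ≤ listBudget c S := by
  obtain ⟨t, ht⟩ := exists_listBudget_eq_listCost_take c (S.filter (· ∈ Y))
  obtain ⟨n, hn⟩ := exists_take_filter_eq_filter_take (· ∈ Y) S t
  have hP := isScheduleOf_toFinset (hS.1.sublist (List.take_sublist n S))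
  have hSY : IsScheduleOf Y (S.filter (· ∈ Y)) := by
    simpa [Finset.filter_mem_eq_inter, Finset.inter_eq_right.2 hYX] using hS.filter (· ∈ Y)
  refine ⟨_, isIdealIn_toFinset_take hS hO n, ?_, ?_⟩
  · calc setBudget r c Y ≤ listBudget c (S.filter (· ∈ Y)) :=
          setBudget_le_listBudget hSY (hO.filter _)
      _ = setCost c ((S.take n).toFinset ∩ Y) := by
          rw [ht, hn, (hP.filter (· ∈ Y)).listCost_eq, Finset.filter_mem_eq_inter]
  · rw [← hP.listCost_eq]
    exact listCost_take_le_listBudget c S n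

theorem setCost_le_setCost_of_isIdealIn (hr : IsPartialOrder ι r) (hJ : setCost c J < 0)
    (hirr : ∀ K, IsIdealIn r J K → cbrLE r c J K) {K : Finset ι} (hK : IsIdealIn r J K) :
    setCost c J ≤ setCost c K := by
  classical
  obtain ⟨K₀, hK₀, hmin⟩ := (J.powerset.filter (IsIdealIn r J)).exists_min_image (setCost c)
    ⟨J, by simp [isIdealIn_self]⟩
  replace hK₀ : IsIdealIn r J K₀ := (Finset.mem_filter.1 hK₀).2
  replace hmin : ∀ K, IsIdealIn r J K → setCost c K₀ ≤ setCost c K := fun K hK =>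
    hmin K (Finset.mem_filter.2 ⟨Finset.mem_powerset.2 hK.1, hK⟩)
  suffices setCost c J ≤ setCost c K₀ from this.trans (hmin K hK)
  by_contra! hlt
  have hb : setBudget r c J < setBudget r c K₀ := by
    obtain ⟨-, h | ⟨hb, h⟩⟩ := (cbrLE_iff_of_neg (hlt.trans hJ)).1 (hirr K₀ hK₀)
    · exact h
    · rw [setReturn, setReturn, hb] at h
      linarith
  -- The prefix of an optimal schedule of `J` where its `K₀`-part peaks costs at least `b(K₀)`
  -- (by minimality of `K₀`, the rest of the prefix costs `≥ 0`) and at most `b(J)`.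
  obtain ⟨S, hS, hO, hSb⟩ := exists_optimal_schedule (c := c) hr J
  obtain ⟨P, hP, hPK₀, hPS⟩ :=
    exists_isIdealIn_setBudget_le_setCost_inter (c := c) hS hO hK₀.1
  have hunion := hmin _ (hK₀.union hP)
  have hsplit₁ : setCost c (K₀ ∪ P) = setCost c K₀ + setCost c (P \ K₀) := by
    rw [← Finset.union_sdiff_self_eq_union, setCost, setCost, setCost,
      Finset.sum_union Finset.disjoint_sdiff]
  have hsplit₂ : setCost c (P ∩ K₀) + setCost c (P \ K₀) = setCost c P :=
    Finset.sum_inter_add_sum_sdiff _ _ _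
  linarith

theorem setBudget_union_le (hr : IsPartialOrder ι r) (hIJ : Disjoint I J)
    (hJI : ∀ i ∈ I, ∀ j ∈ J, ¬ r j i) :
    setBudget r c (I ∪ J) ≤ max (setBudget r c I) (setCost c I + setBudget r c J) := by
  obtain ⟨S, hS, hSO, hSb⟩ := exists_optimal_schedule (c := c) hr I
  obtain ⟨T, hT, hTO, hTb⟩ := exists_optimal_schedule (c := c) hr J
  have hO : (S ++ T).Pairwise fun a b => ¬ r b a := List.pairwise_append.2
    ⟨hSO, hTO, fun i hi j hj => hJI i ((hS.2 i).1 hi) j ((hT.2 j).1 hj)⟩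
  calc setBudget r c (I ∪ J) ≤ listBudget c (S ++ T) :=
        setBudget_le_listBudget (hS.append hIJ hT) hO
    _ = _ := by rw [listBudget_append, hSb, hTb, hS.listCost_eq]

theorem add_setCost_le_setBudget_union (hr : IsPartialOrder ι r) (hIJ : Disjoint I J)
    (hJ : ∀ K, IsIdealIn r J K → setCost c J ≤ setCost c K) :
    setBudget r c I + setCost c J ≤ setBudget r c (I ∪ J) := by
  refine le_setBudget hr fun S hS hO => ?_
  obtain ⟨P, hP, hPI, hPS⟩ :=
    exists_isIdealIn_setBudget_le_setCost_inter (c := c) hS hO Finset.subset_union_left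
  have hPJ : IsIdealIn r J (P \ I) := by
    refine ⟨fun a ha => ?_, fun j hj i hi hij => ?_⟩
    · obtain ⟨haP, haI⟩ := Finset.mem_sdiff.1 ha
      exact (Finset.mem_union.1 (hP.1 haP)).resolve_left haI
    · exact Finset.mem_sdiff.2
        ⟨hP.2 j (Finset.mem_sdiff.1 hj).1 i (Finset.mem_union_right _ hi) hij,
          Finset.disjoint_right.1 hIJ hi⟩
  calc setBudget r c I + setCost c J ≤ setCost c (P ∩ I) + setCost c (P \ I) :=
        add_le_add hPI (hJ _ hPJ)
    _ = setCost c P := Finset.sum_inter_add_sum_sdiff _ _ _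
    _ ≤ listBudget c S := hPS

theorem setBudget_le_max_erase (hr : IsPartialOrder ι r) {x : ι} (hx : x ∈ X)
    (hmax : ∀ y ∈ X, r x y → y = x) :
    setBudget r c X ≤ max (setBudget r c (X.erase x)) (setCost c X) := by
  obtain ⟨S, hS, hO, hSb⟩ := exists_optimal_schedule (c := c) hr (X.erase x)
  have hcost : setCost c (X.erase x) + c x = setCost c X := Finset.sum_erase_add _ _ hx
  have hle := setCost_le_setBudget (c := c) hr (X.erase x)
  calc setBudget r c X ≤ listBudget c (S ++ [x]) :=
        setBudget_le_listBudget (isScheduleOf_concat_iff.2 ⟨hx, hS⟩)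
          (pairwise_concat_of_maximal hS hO hmax)
    _ = max (setBudget r c (X.erase x)) (setCost c (X.erase x) + max 0 (c x)) := by
        rw [listBudget_append, hSb, hS.listCost_eq, listBudget, listBudget, add_zero]
    _ ≤ max (setBudget r c (X.erase x)) (setCost c X) := by
        rcases le_total (c x) 0 with h | h
        · rw [max_eq_left h]
          exact le_max_of_le_left (max_le le_rfl (by linarith))
        · rw [max_eq_right h, hcost]

theorem exists_maximal_setBudget_erase_le (hr : IsPartialOrder ι r) (hX : X.Nonempty) :
    ∃ x ∈ X, (∀ y ∈ X, r x y → y = x) ∧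
      setBudget r c (X.erase x) ≤ setBudget r c X := by
  obtain ⟨S, hS, hO, hSb⟩ := exists_optimal_schedule (c := c) hr X
  obtain rfl | ⟨Q, x, rfl⟩ := S.eq_nil_or_concat
  · obtain ⟨y, hy⟩ := hX
    exact absurd ((hS.2 y).2 hy) List.not_mem_nil
  rw [List.concat_eq_append] at hS hO hSb
  obtain ⟨hx, hQ⟩ := isScheduleOf_concat_iff.1 hS
  obtain ⟨hQO, -, hxQ⟩ := List.pairwise_append.1 hO
  refine ⟨x, hx, fun y hy hxy => ?_, ?_⟩
  · by_contra hyx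
    exact hxQ y ((hQ.2 y).2 (Finset.mem_erase.2 ⟨hyx, hy⟩)) x (List.mem_singleton_self x) hxy
  · calc setBudget r c (X.erase x) ≤ listBudget c Q := setBudget_le_listBudget hQ hQO
      _ ≤ listBudget c (Q ++ [x]) := by rw [listBudget_append]; exact le_max_left _ _
      _ = setBudget r c X := hSb

theorem add_setBudget_add_le_of_erase (hr : IsPartialOrder ι r) (hXY : Disjoint X Y) {x : ι}
    (hx : x ∈ X) (hmax : ∀ y ∈ X, r x y → y = x) {ρ : ℝ} (hρ : ρ ≤ setReturn r c Y)
    (h : setBudget r c (X.erase x) + setBudget r c Y + ρ ≤ setBudget r c (X ∪ Y)) :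
    setBudget r c X + setBudget r c Y + ρ ≤ setBudget r c (X ∪ Y) := by
  have hcost := setCost_le_setBudget (c := c) hr (X ∪ Y)
  rw [setCost_union hXY] at hcost
  rw [setReturn] at hρ
  rcases le_max_iff.1 (setBudget_le_max_erase (c := c) hr hx hmax) with h' | h' <;> linarith

theorem add_setBudget_add_le_setBudget_union (hr : IsPartialOrder ι r) (hIJ : Disjoint I J)
    {ρ : ℝ} (hIρ : ∀ A, IsIdealIn r I A → ρ ≤ setReturn r c A)
    (hJρ : ∀ K, IsIdealIn r J K → ρ ≤ setReturn r c K) {A K : Finset ι}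
    (hA : IsIdealIn r I A) (hK : IsIdealIn r J K) :
    setBudget r c A + setBudget r c K + ρ ≤ setBudget r c (A ∪ K) := by
  induction hZ : A ∪ K using Finset.strongInduction generalizing A K with
  | H Z ih =>
    have hAK : Disjoint A K := hIJ.mono hA.1 hK.1
    subst hZ
    rcases (A ∪ K).eq_empty_or_nonempty with hZ | hZ
    · obtain ⟨rfl, rfl⟩ := Finset.union_eq_empty.1 hZ
      have := hIρ ∅ hA
      simp only [setReturn, setCost, Finset.sum_empty, Finset.union_empty] at this ⊢
      linarith
    obtain ⟨x, hx, hmax, hle⟩ := exists_maximal_setBudget_erase_le (c := c) hr hZ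
    rcases Finset.mem_union.1 hx with hxA | hxK
    · have hxK : x ∉ K := Finset.disjoint_left.1 hAK hxA
      have hmaxA : ∀ y ∈ A, r x y → y = x := fun y hy => hmax y (Finset.mem_union_left _ hy)
      have := ih _ (Finset.erase_ssubset hx) (hA.erase hmaxA) hK
        (by rw [Finset.erase_union_distrib, Finset.erase_eq_of_notMem hxK])
      exact add_setBudget_add_le_of_erase hr hAK hxA hmaxA (hJρ K hK) (this.trans hle)
    · have hxA : x ∉ A := Finset.disjoint_right.1 hAK hxK
      have hmaxK : ∀ y ∈ K, r x y → y = x := fun y hy => hmax y (Finset.mem_union_right _ hy)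
      have := (ih _ (Finset.erase_ssubset hx) hA (hK.erase hmaxK)
        (by rw [Finset.erase_union_distrib, Finset.erase_eq_of_notMem hxA])).trans hle
      rw [Finset.union_comm] at this ⊢
      linarith [add_setBudget_add_le_of_erase hr hAK.symm hxK hmaxK (hIρ A hA) (by linarith)]

end Blocks

theorem merge_consecutive_blocks (r : ι → ι → Prop) (hr : IsPartialOrder ι r)
    (c : ι → ℝ) (N I J : Finset ι)
    (hIdeal : IsIdealIn r N I) (hIirr : ∀ K, IsIdealIn r I K → cbrLE r c I K)
    (hJIdeal : IsIdealIn r (N \ I) J) (hJirr : ∀ K, IsIdealIn r J K → cbrLE r c J K)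
    (hgt : cbrLE r c J I ∧ ¬ cbrLE r c I J) :
    cbrLE r c (I ∪ J) I := by
  have hJmem : ∀ j ∈ J, j ∈ N ∧ j ∉ I := fun j hj => Finset.mem_sdiff.1 (hJIdeal.1 hj)
  have hIJ : Disjoint I J := Finset.disjoint_right.2 fun j hj => (hJmem j hj).2
  rcases lt_or_ge (setCost c I) 0 with hI | hI
  · obtain ⟨hJneg, hbJI⟩ : setCost c J < 0 ∧ setBudget r c J ≤ setBudget r c I := by
      obtain ⟨hJneg, h | ⟨h, -⟩⟩ := (cbrLE_iff_of_neg hI).1 hgt.1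
      exacts [⟨hJneg, h.le⟩, ⟨hJneg, h.le⟩]
    have hJI : ∀ i ∈ I, ∀ j ∈ J, ¬ r j i := fun i hi j hj hji =>
      (hJmem j hj).2 (hIdeal.2 i hi j (hJmem j hj).1 hji)
    have hb : setBudget r c (I ∪ J) ≤ setBudget r c I :=
      (setBudget_union_le hr hIJ hJI).trans (max_le le_rfl (by linarith))
    refine (cbrLE_iff_of_neg hI).2 ⟨by rw [setCost_union hIJ]; linarith, ?_⟩
    refine hb.lt_or_eq.imp id fun h => ⟨h, ?_⟩
    rw [setReturn, setReturn, h, setCost_union hIJ]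
    linarith
  · have key : setBudget r c I + setCost c J ≤ setBudget r c (I ∪ J) := by
      rcases lt_or_ge (setCost c J) 0 with hJneg | hJnonneg
      · exact add_setCost_le_setBudget_union hr hIJ fun K hK =>
          setCost_le_setCost_of_isIdealIn hr hJneg hJirr hK
      · have hJI := ((cbrLE_iff_of_nonneg hJnonneg).1 hgt.1).2
        have := add_setBudget_add_le_setBudget_union hr hIJ
          (fun A hA => hJI.trans ((cbrLE_iff_of_nonneg hI).1 (hIirr A hA)).2)
          (fun K hK => ((cbrLE_iff_of_nonneg hJnonneg).1 (hJirr K hK)).2)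
          (isIdealIn_self I) (isIdealIn_self J)
        rw [setReturn] at this
        linarith
    rcases lt_or_ge (setCost c (I ∪ J)) 0 with hU | hU
    · exact Or.inl ⟨hU, hI⟩
    · refine (cbrLE_iff_of_nonneg hU).2 ⟨hI, ?_⟩
      rw [setReturn, setReturn, setCost_union hIJ]
      linarith
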